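/- arXiv:1712.08374 — 3 statements merged into one kernel-verified Lean document; each statement's English description precedes it below -/
import Mathlib

section
/- Let g : ℝ^∞ → ℝ be a measurable function of a sequence of random vectors (X_1, X_2, ...) in ℝ^n with each ‖X_k‖ = h almost surely. If for every sequence (B_1, B_2, ...) of orthogonal matrices in O(n), g(X_1, X_2, ...) = g(B_1·X_1, B_2·X_2, ...) almost surely, then g(X_1, X_2, ...) is a function only of (‖X_1‖, ‖X_2‖, ...) and hence is almost surely constant. -/
open MeasureTheory ProbabilityTheory Filter
open scoped NNReal

noncomputable section

/-- Euclidean norm on `Fin n → ℝ`. -/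
def eNorm {n : ℕ} (x : Fin n → ℝ) : ℝ := Real.sqrt (∑ i, x i ^ 2)

set_option synthInstance.maxHeartbeats 1000000
set_option maxHeartbeats 1000000

/-! ### Auxiliary setup: the orthogonal group as a compact topological group -/

abbrev OGrp (n : ℕ) : Type := ↥(Matrix.orthogonalGroup (Fin n) ℝ)

instance (n : ℕ) : ContinuousMul (OGrp n) :=
  ⟨continuous_induced_rng.2 <| (continuous_subtype_val.comp continuous_fst).matrix_mul
    (continuous_subtype_val.comp continuous_snd)⟩

instance (n : ℕ) : ContinuousInv (OGrp n) := by
  refine ⟨continuous_induced_rng.2 ?_⟩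
  have : (Subtype.val ∘ fun u : OGrp n => u⁻¹)
      = fun u : OGrp n => star (u : Matrix (Fin n) (Fin n) ℝ) := by
    funext u
    show ((u⁻¹ : OGrp n) : Matrix (Fin n) (Fin n) ℝ) = _
    rw [← Unitary.star_eq_inv]
    rfl
  rw [this]
  exact continuous_star.comp continuous_subtype_val

instance (n : ℕ) : IsTopologicalGroup (OGrp n) := ⟨⟩

lemma entry_bound {n : ℕ} {A : Matrix (Fin n) (Fin n) ℝ}
    (hA : A ∈ Matrix.orthogonalGroup (Fin n) ℝ) (i j : Fin n) : A i j ∈ Set.Icc (-1:ℝ) 1 := by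
  have h1 : A * star A = 1 := (Matrix.mem_orthogonalGroup_iff (Fin n) ℝ).1 hA
  have h2 : (A * star A) i i = 1 := by rw [h1]; simp [Matrix.one_apply]
  have h3 : ∑ k, A i k ^ 2 = 1 := by
    rw [Matrix.mul_apply] at h2
    simpa [Matrix.star_apply, sq] using h2
  have h4 : A i j ^ 2 ≤ 1 := by
    rw [← h3]
    exact Finset.single_le_sum (f := fun k => A i k ^ 2) (fun k _ => sq_nonneg _)
      (Finset.mem_univ j)
  have h5 : |A i j| ≤ 1 := (sq_le_one_iff_abs_le_one _).1 h4
  exact ⟨neg_le_of_abs_le h5, le_of_abs_le h5⟩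

lemma ogrp_compact (n : ℕ) :
    IsCompact ((Matrix.orthogonalGroup (Fin n) ℝ) : Set (Matrix (Fin n) (Fin n) ℝ)) := by
  have hbox : IsCompact (Set.univ.pi fun _ : Fin n => Set.univ.pi fun _ : Fin n =>
      Set.Icc (-1:ℝ) 1) :=
    isCompact_univ_pi fun _ => isCompact_univ_pi fun _ => isCompact_Icc
  refine IsCompact.of_isClosed_subset hbox ?_ ?_
  · have : ((Matrix.orthogonalGroup (Fin n) ℝ) : Set (Matrix (Fin n) (Fin n) ℝ))
        = {A | A * star A = 1} ∩ {A | star A * A = 1} := by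
      ext A
      constructor
      · intro hA
        exact ⟨(Matrix.mem_orthogonalGroup_iff (Fin n) ℝ).1 hA,
          (Matrix.mem_orthogonalGroup_iff' (Fin n) ℝ).1 hA⟩
      · intro hA
        exact (Matrix.mem_orthogonalGroup_iff (Fin n) ℝ).2 hA.1
    rw [this]
    exact (isClosed_eq (continuous_id.matrix_mul continuous_id.matrix_conjTranspose)
        continuous_const).inter
      (isClosed_eq (continuous_id.matrix_conjTranspose.matrix_mul continuous_id)
        continuous_const)
  · intro A hA
    intro i _ j _
    exact entry_bound hA i j

instance (n : ℕ) : CompactSpace (OGrp n) := isCompact_iff_compactSpace.1 (ogrp_compact n)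

instance (n : ℕ) : MeasurableSpace (OGrp n) := borel _
instance (n : ℕ) : BorelSpace (OGrp n) := ⟨rfl⟩
instance (n : ℕ) : SecondCountableTopology (Matrix (Fin n) (Fin n) ℝ) :=
  inferInstanceAs (SecondCountableTopology (Fin n → Fin n → ℝ))
instance (n : ℕ) : SecondCountableTopology (OGrp n) :=
  Topology.IsEmbedding.subtypeVal.secondCountableTopology

/-- The sequence group `O(n)^ℕ`. -/
abbrev HGrp (n : ℕ) := ℕ → OGrp n

/-- A right-invariant probability-like (finite, open-positive) measure on `O(n)^ℕ`:
the inverse of a Haar measure. -/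
def muH (n : ℕ) : Measure (HGrp n) := (MeasureTheory.Measure.haar : Measure (HGrp n)).inv

instance (n : ℕ) : (muH n).IsMulRightInvariant := by unfold muH; infer_instance
instance (n : ℕ) : IsFiniteMeasure (muH n) := by
  constructor
  rw [muH, Measure.inv_apply, Set.inv_univ]
  exact measure_lt_top _ _
instance (n : ℕ) : (muH n).IsOpenPosMeasure := by unfold muH; infer_instance

/-! ### Existence of an orthogonal matrix mapping `x` to `y` when norms agree -/

lemma eNorm_eq_norm {n : ℕ} (x : Fin n → ℝ) :
    eNorm x = ‖(WithLp.equiv 2 (Fin n → ℝ)).symm x‖ := by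
  rw [EuclideanSpace.norm_eq]
  unfold eNorm
  congr 1
  apply Finset.sum_congr rfl
  intro i _
  rw [WithLp.equiv_symm_apply, PiLp.toLp_apply, Real.norm_eq_abs, sq_abs]

lemma exists_rot {n : ℕ} (x y : Fin n → ℝ) (hxy : eNorm x = eNorm y) :
    ∃ A ∈ Matrix.orthogonalGroup (Fin n) ℝ, ∀ i, ∑ j, A i j * x j = y i := by
  classical
  set e := WithLp.equiv 2 (Fin n → ℝ) with he
  set x' := e.symm x
  set y' := e.symm y
  have hnorm : ‖x'‖ = ‖y'‖ := by rw [← eNorm_eq_norm, ← eNorm_eq_norm, hxy]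
  set f := Submodule.reflection (ℝ ∙ (x' - y'))ᗮ with hf
  have hfx : f x' = y' := Submodule.reflection_sub hnorm
  set L : (Fin n → ℝ) →ₗ[ℝ] (Fin n → ℝ) :=
    ((WithLp.linearEquiv 2 ℝ (Fin n → ℝ)).symm.trans
      (f.toLinearEquiv.trans (WithLp.linearEquiv 2 ℝ (Fin n → ℝ)))).toLinearMap with hL
  have hLdef : ∀ v : Fin n → ℝ, L v = e (f (e.symm v)) := fun v => rfl
  have inner_key : ∀ u v : Fin n → ℝ, ∑ i, L u i * L v i = ∑ i, u i * v i := by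
    intro u v
    have h1 : ∑ i, L u i * L v i = (inner ℝ (f (e.symm u)) (f (e.symm v)) : ℝ) := by
      rw [PiLp.inner_apply]
      apply Finset.sum_congr rfl
      intro i _
      rw [RCLike.inner_apply, starRingEnd_apply, star_trivial]
      exact mul_comm _ _
    rw [h1, LinearIsometryEquiv.inner_map_map, PiLp.inner_apply]
    apply Finset.sum_congr rfl
    intro i _
    rw [RCLike.inner_apply, starRingEnd_apply, star_trivial]
    exact mul_comm _ _
  set A := LinearMap.toMatrix' L with hA
  have hmulVec : ∀ v : Fin n → ℝ, A.mulVec v = L v := by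
    intro v
    rw [hA, ← Matrix.toLin'_apply, Matrix.toLin'_toMatrix']
  refine ⟨A, ?_, ?_⟩
  · rw [Matrix.mem_orthogonalGroup_iff' (Fin n) ℝ]
    ext j k
    rw [Matrix.mul_apply]
    have : ∀ i, (star A) j i * A i k = A i j * A i k := by
      intro i; rw [Matrix.star_apply, star_trivial]
    change ∑ i, A i j * A i k = _
    have hentry : ∀ i j, A i j = L (fun j' => if j' = j then 1 else 0) i := by
      intro i j; rw [hA, LinearMap.toMatrix'_apply]
      rw [show (Pi.single j 1 : Fin n → ℝ) = fun j' => if j' = j then 1 else 0 from by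
        funext j'; simp [Pi.single_apply]]
    simp_rw [hentry, inner_key]
    by_cases hjk : j = k
    · subst hjk
      simp [Matrix.one_apply]
    · rw [Matrix.one_apply_ne hjk]
      rw [Finset.sum_eq_zero]
      intro i _
      by_cases hij : i = j
      · subst hij; simp [Ne.symm hjk, hjk]
      · simp [hij]
  · intro i
    have := congrFun (hmulVec x) i
    rw [hLdef] at this
    have h2 : e (f (e.symm x)) = y := by rw [hfx]; rfl
    rw [h2] at this
    rw [← this]
    simp [Matrix.mulVec, dotProduct]

/-! ### The rotation action on sequences and invariance of the pushforward -/

/-- The action of a sequence of orthogonal matrices on a sequence of vectors. -/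
def rotSeq {n : ℕ} (x : ℕ → Fin n → ℝ) (B : HGrp n) : ℕ → Fin n → ℝ :=
  fun k i => ∑ j, (B k : Matrix (Fin n) (Fin n) ℝ) i j * x k j

lemma measurable_rotSeq {n : ℕ} (x : ℕ → Fin n → ℝ) : Measurable (rotSeq x) := by
  apply measurable_pi_lambda
  intro k
  apply measurable_pi_lambda
  intro i
  apply Finset.measurable_sum
  intro j _
  have hc : Continuous fun B : HGrp n => (B k : Matrix (Fin n) (Fin n) ℝ) i j :=
    (continuous_apply j).comp ((continuous_apply i).comp
      ((continuous_subtype_val : Continuous (Subtype.val : OGrp n → Matrix (Fin n) (Fin n) ℝ)).comp (continuous_apply k)))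
  exact (hc.measurable).mul_const _

lemma map_rotSeq_eq {n : ℕ} {h : ℝ} (x y : ℕ → Fin n → ℝ)
    (hx : ∀ k, eNorm (x k) = h) (hy : ∀ k, eNorm (y k) = h) :
    (muH n).map (rotSeq x) = (muH n).map (rotSeq y) := by
  classical
  have hexists : ∀ k, ∃ A ∈ Matrix.orthogonalGroup (Fin n) ℝ, ∀ i, ∑ j, A i j * x k j = y k i :=
    fun k => exists_rot (x k) (y k) (by rw [hx k, hy k])
  choose A hAmem hAeq using hexists
  set a : HGrp n := fun k => ⟨A k, hAmem k⟩ with ha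
  have hcomp : rotSeq y = (rotSeq x) ∘ (· * a) := by
    funext B k i
    show ∑ j, (B k : Matrix (Fin n) (Fin n) ℝ) i j * y k j
      = ∑ j, (((B * a) k : OGrp n) : Matrix (Fin n) (Fin n) ℝ) i j * x k j
    have hcoe : (((B * a) k : OGrp n) : Matrix (Fin n) (Fin n) ℝ)
        = (B k : Matrix (Fin n) (Fin n) ℝ) * A k := rfl
    rw [hcoe]
    have : ∀ j, y k j = ∑ l, A k j l * x k l := fun j => (hAeq k j).symm
    calc ∑ j, (B k : Matrix (Fin n) (Fin n) ℝ) i j * y k j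
        = ∑ j, (B k : Matrix (Fin n) (Fin n) ℝ) i j * ∑ l, A k j l * x k l := by
          apply Finset.sum_congr rfl; intro j _; rw [← this j]
      _ = ∑ j, ∑ l, (B k : Matrix (Fin n) (Fin n) ℝ) i j * (A k j l * x k l) := by
          apply Finset.sum_congr rfl; intro j _; rw [Finset.mul_sum]
      _ = ∑ l, (∑ j, (B k : Matrix (Fin n) (Fin n) ℝ) i j * A k j l) * x k l := by
          rw [Finset.sum_comm]
          apply Finset.sum_congr rfl; intro l _
          rw [Finset.sum_mul]
          apply Finset.sum_congr rfl; intro j _; ring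
      _ = ∑ l, ((B k : Matrix (Fin n) (Fin n) ℝ) * A k) i l * x k l := by
          apply Finset.sum_congr rfl; intro l _
          rw [Matrix.mul_apply]
  rw [hcomp]
  have hm : Measurable fun B : HGrp n => B * a := measurable_mul_const a
  rw [← Measure.map_map (measurable_rotSeq x) hm]
  rw [map_mul_right_eq_self (muH n) a]

/-- Let `g` be a measurable function of a sequence of random vectors `(X 0, X 1, …)`
in `ℝⁿ` with each `‖X k‖ = h` almost surely. If for every sequence `(B 0, B 1, …)`
of orthogonal matrices, `g (X 0, X 1, …) = g (B 0 ⬝ X 0, B 1 ⬝ X 1, …)` almost surely,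
then `g (X 0, X 1, …)` is almost surely constant. -/
theorem rotation_invariant_function_const {Ω : Type*} [MeasurableSpace Ω]
    (P : Measure Ω) [IsProbabilityMeasure P] (n : ℕ) (hn : 0 < n)
    (h : ℝ) (hh : 0 < h)
    (X : ℕ → Ω → Fin n → ℝ) (hXmeas : ∀ k, Measurable (X k))
    (hXnorm : ∀ k, ∀ᵐ ω ∂P, eNorm (X k ω) = h)
    (g : (ℕ → Fin n → ℝ) → ℝ) (hg : Measurable g)
    (hinv : ∀ B : ℕ → Matrix (Fin n) (Fin n) ℝ,
      (∀ k, B k ∈ Matrix.orthogonalGroup (Fin n) ℝ) →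
      (fun ω => g (fun k => X k ω)) =ᵐ[P]
        fun ω => g (fun k i => ∑ j, B k i j * X k ω j)) :
    ∃ c : ℝ, (fun ω => g (fun k => X k ω)) =ᵐ[P] fun _ => c := by
  classical
  set μ := muH n with hμ
  -- the joint map is measurable
  have hF0 : Measurable fun p : Ω × HGrp n => g (fun k => X k p.1) := by
    apply hg.comp
    apply measurable_pi_lambda
    intro k
    exact (hXmeas k).comp measurable_fst
  have hFmeas : Measurable fun p : Ω × HGrp n => g (rotSeq (fun k => X k p.1) p.2) := by
    apply hg.comp
    apply measurable_pi_lambda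
    intro k
    apply measurable_pi_lambda
    intro i
    apply Finset.measurable_sum
    intro j _
    have h1 : Measurable fun p : Ω × HGrp n => (p.2 k : Matrix (Fin n) (Fin n) ℝ) i j := by
      have hc : Continuous fun B : HGrp n => (B k : Matrix (Fin n) (Fin n) ℝ) i j :=
        (continuous_apply j).comp ((continuous_apply i).comp
          ((continuous_subtype_val : Continuous (Subtype.val : OGrp n → Matrix (Fin n) (Fin n) ℝ)).comp (continuous_apply k)))
      exact hc.measurable.comp measurable_snd
    have h2 : Measurable fun p : Ω × HGrp n => X k p.1 j :=
      (measurable_pi_apply j).comp ((hXmeas k).comp measurable_fst)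
    exact h1.mul h2
  -- the "bad" set
  set N : Set (Ω × HGrp n) :=
    {p | g (fun k => X k p.1) ≠ g (rotSeq (fun k => X k p.1) p.2)} with hN
  have hNmeas : MeasurableSet N := (measurableSet_eq_fun hF0 hFmeas).compl
  -- each B-slice is P-null, by hypothesis
  have hslice : ∀ B : HGrp n, P ((fun ω => (ω, B)) ⁻¹' N) = 0 := by
    intro B
    have := hinv (fun k => (B k : Matrix (Fin n) (Fin n) ℝ)) (fun k => (B k).2)
    rw [Filter.EventuallyEq, ae_iff] at this
    convert this using 2
    rfl
  -- hence the product measure of N is zero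
  have hprod : (P.prod μ) N = 0 := by
    rw [Measure.prod_apply_symm hNmeas]
    simp only [hslice]
    exact lintegral_zero
  -- so a.e. ω has μ-null slice
  have hae : ∀ᵐ ω ∂P, μ (Prod.mk ω ⁻¹' N) = 0 := by
    have := (Measure.measure_prod_null hNmeas).1 hprod
    filter_upwards [this] with ω hω using hω
  have hnormae : ∀ᵐ ω ∂P, ∀ k, eNorm (X k ω) = h := ae_all_iff.2 hXnorm
  have hA : ∀ᵐ ω ∂P, μ (Prod.mk ω ⁻¹' N) = 0 ∧ ∀ k, eNorm (X k ω) = h := hae.and hnormae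
  -- pick a base point
  haveI : (ae P).NeBot := ae_neBot.2 (IsProbabilityMeasure.ne_zero P)
  obtain ⟨ω₀, hω₀⟩ := hA.exists
  refine ⟨g (fun k => X k ω₀), ?_⟩
  -- key: for good ω, the pushforward kills {g ≠ g(X ω)}
  have hkey : ∀ ω : Ω, (μ (Prod.mk ω ⁻¹' N) = 0 ∧ ∀ k, eNorm (X k ω) = h) →
      (μ.map (rotSeq (fun k => X k ω))) {y | g y ≠ g (fun k => X k ω)} = 0 := by
    intro ω hω
    have hms : MeasurableSet {y : ℕ → Fin n → ℝ | g y ≠ g (fun k => X k ω)} :=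
      (measurableSet_eq_fun hg measurable_const).compl
    rw [Measure.map_apply (measurable_rotSeq _) hms]
    have : rotSeq (fun k => X k ω) ⁻¹' {y | g y ≠ g (fun k => X k ω)}
        = Prod.mk ω ⁻¹' N := by
      ext B
      simp only [Set.mem_preimage, Set.mem_setOf_eq, hN]
      exact ⟨fun hB => fun hc => hB hc.symm, fun hB => fun hc => hB hc.symm⟩
    rw [this]
    exact hω.1
  filter_upwards [hA] with ω hω
  -- the two pushforwards agree
  have hmaps : μ.map (rotSeq (fun k => X k ω)) = μ.map (rotSeq (fun k => X k ω₀)) :=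
    map_rotSeq_eq _ _ hω.2 hω₀.2
  set ρ := μ.map (rotSeq (fun k => X k ω)) with hρ
  have hz1 : ρ {y | g y ≠ g (fun k => X k ω)} = 0 := hkey ω hω
  have hz2 : ρ {y | g y ≠ g (fun k => X k ω₀)} = 0 := by
    rw [hmaps]
    exact hkey ω₀ hω₀
  have hρuniv : ρ Set.univ ≠ 0 := by
    rw [hρ, Measure.map_apply (measurable_rotSeq _) MeasurableSet.univ, Set.preimage_univ]
    exact isOpen_univ.measure_ne_zero μ Set.univ_nonempty
  -- intersect the two full-measure sets
  have hunion : ρ ({y | g y ≠ g (fun k => X k ω)} ∪ {y | g y ≠ g (fun k => X k ω₀)}) = 0 :=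
    le_antisymm (le_trans (measure_union_le _ _) (by rw [hz1, hz2]; simp)) zero_le
  have hne : ({y | g y ≠ g (fun k => X k ω)} ∪ {y | g y ≠ g (fun k => X k ω₀)}) ≠ Set.univ := by
    intro hcontra
    rw [hcontra] at hunion
    exact hρuniv hunion
  have : ∃ y, g y = g (fun k => X k ω) ∧ g y = g (fun k => X k ω₀) := by
    by_contra hcon
    push_neg at hcon
    apply hne
    ext y
    simp only [Set.mem_union, Set.mem_setOf_eq, Set.mem_univ, iff_true]
    by_cases h1 : g y = g (fun k => X k ω)
    · exact Or.inr (hcon y h1)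
    · exact Or.inl h1
  obtain ⟨y, hy1, hy2⟩ := this
  show g (fun k => X k ω) = g (fun k => X k ω₀)
  rw [← hy1, hy2]
end
end

section
/- Let A : ℝ≥0 × Ω → Sym(n) be a predictable process taking values in symmetric positive semidefinite n×n matrices. Then there exists a predictable process B taking values in O(n) such that B_t · A_t · B_tᵀ is diagonal for all t, almost surely. -/
open MeasureTheory ProbabilityTheory Filter Matrix
open scoped NNReal

open TopologicalSpace Topology

noncomputable section

instance {l m : Type*} : MeasurableSpace (Matrix l m ℝ) := MeasurableSpace.pi

/-- The predictable σ-algebra on `ℝ≥0 × Ω` associated with a filtration `ℱ`: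
generated by the stochastic intervals `(s, t] × A` with `A ∈ ℱ s`, together with
the sets `{0} × A` with `A ∈ ℱ 0`. -/
def predictableSigma {Ω : Type*} [m0 : MeasurableSpace Ω] (ℱ : Filtration ℝ≥0 m0) :
    MeasurableSpace (ℝ≥0 × Ω) :=
  MeasurableSpace.generateFrom
    ({S | ∃ (s t : ℝ≥0) (A : Set Ω), s < t ∧ MeasurableSet[ℱ s] A ∧ S = Set.Ioc s t ×ˢ A} ∪
     {S | ∃ A : Set Ω, MeasurableSet[ℱ 0] A ∧ S = {0} ×ˢ A})

/-- A process is predictable if it is measurable w.r.t. the predictable σ-algebra. -/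
def Predictable {Ω β : Type*} [m0 : MeasurableSpace Ω] [MeasurableSpace β]
    (ℱ : Filtration ℝ≥0 m0) (f : ℝ≥0 → Ω → β) : Prop :=
  @Measurable _ _ (predictableSigma ℱ) _ (fun p : ℝ≥0 × Ω => f p.1 p.2)

theorem krn_selection {X K : Type*} [MeasurableSpace X] [MetricSpace K] [CompactSpace K]
    [SecondCountableTopology K] [Nonempty K] [MeasurableSpace K] [BorelSpace K]
    (G : Set (X × K))
    (hmeas : ∀ C : Set K, IsClosed C → MeasurableSet {x | ∃ y ∈ C, (x, y) ∈ G})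
    (hclosed : ∀ x, IsClosed {y | (x, y) ∈ G})
    (hne : ∀ x, ∃ y, (x, y) ∈ G) :
    ∃ f : X → K, Measurable f ∧ ∀ x, (x, f x) ∈ G := by
  classical
  set u : ℕ → K := denseSeq K with hu_def
  have hu : DenseRange u := denseRange_denseSeq K
  -- the inductive step
  have step : ∀ (r R : ℝ), 0 < r → ∀ g : X → K, Measurable g → (∀ x, ∃ j, g x = u j) →
      (∀ x, ∃ y, (x, y) ∈ G ∧ dist y (g x) ≤ R) →
      ∃ g' : X → K, Measurable g' ∧ (∀ x, ∃ j, g' x = u j) ∧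
        (∀ x, ∃ y, (x, y) ∈ G ∧ dist y (g' x) ≤ r ∧ dist y (g x) ≤ R) := by
    intro r R hr g hg hrange hinv
    have hex : ∀ x, ∃ k, ∃ y, (x, y) ∈ G ∧ dist y (u k) ≤ r ∧ dist y (g x) ≤ R := by
      intro x
      obtain ⟨y, hyG, hyR⟩ := hinv x
      obtain ⟨k, hk⟩ := Metric.denseRange_iff.mp hu y r hr
      exact ⟨k, y, hyG, hk.le, hyR⟩
    refine ⟨fun x => u (Nat.find (hex x)), ?_, fun x => ⟨_, rfl⟩, fun x => ?_⟩
    · have hN : Measurable fun x => Nat.find (hex x) := by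
        apply measurable_find
        intro k
        have hset : {x | ∃ y, (x, y) ∈ G ∧ dist y (u k) ≤ r ∧ dist y (g x) ≤ R}
            = ⋃ j, (g ⁻¹' {u j}) ∩
              {x | ∃ y ∈ Metric.closedBall (u k) r ∩ Metric.closedBall (u j) R, (x, y) ∈ G} := by
          ext x
          simp only [Set.mem_setOf_eq, Set.mem_iUnion, Set.mem_inter_iff, Set.mem_preimage,
            Set.mem_singleton_iff, Metric.mem_closedBall]
          constructor
          · rintro ⟨y, h1, h2, h3⟩
            obtain ⟨j, hj⟩ := hrange x
            refine ⟨j, hj, y, ⟨h2, ?_⟩, h1⟩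
            rw [← hj]; exact h3
          · rintro ⟨j, hj, y, ⟨h2, h3⟩, h1⟩
            exact ⟨y, h1, h2, by rw [hj]; exact h3⟩
        rw [hset]
        exact MeasurableSet.iUnion fun j =>
          (hg (measurableSet_singleton _)).inter
            (hmeas _ ((Metric.isClosed_closedBall).inter Metric.isClosed_closedBall))
      exact measurable_from_top.comp hN
    · obtain ⟨y, h1, h2, h3⟩ := Nat.find_spec (hex x)
      exact ⟨y, h1, h2, h3⟩
  -- base
  obtain ⟨R, hR⟩ : ∃ R : ℝ, ∀ z : K, dist z (u 0) ≤ R := by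
    obtain ⟨R, hR⟩ := Metric.isBounded_iff_subset_closedBall (u 0) |>.mp
      (isCompact_univ.isBounded)
    exact ⟨R, fun z => hR (Set.mem_univ z)⟩
  set Q : ℕ → (X → K) → Prop := fun m g =>
    Measurable g ∧ (∀ x, ∃ j, g x = u j) ∧
      ∀ x, ∃ y, (x, y) ∈ G ∧ dist y (g x) ≤ (2:ℝ)⁻¹ ^ m with hQdef
  have hbase : ∃ g, Q 0 g := by
    obtain ⟨g', hg1, hg2, hg3⟩ := step 1 R one_pos (fun _ => u 0) measurable_const
      (fun x => ⟨0, rfl⟩) (fun x => (hne x).imp fun y hy => ⟨hy, hR y⟩)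
    exact ⟨g', hg1, hg2, fun x => by
      obtain ⟨y, h1, h2, _⟩ := hg3 x
      exact ⟨y, h1, by simpa using h2⟩⟩
  have hstep : ∀ m (g : X → K), Q m g →
      ∃ g', Q (m + 1) g' ∧ ∀ x, dist (g x) (g' x) ≤ 2 * (2:ℝ)⁻¹ ^ m := by
    intro m g ⟨hg1, hg2, hg3⟩
    obtain ⟨g', h1, h2, h3⟩ := step ((2:ℝ)⁻¹ ^ (m + 1)) ((2:ℝ)⁻¹ ^ m)
      (by positivity) g hg1 hg2 hg3
    refine ⟨g', ⟨h1, h2, fun x => ?_⟩, fun x => ?_⟩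
    · obtain ⟨y, hy1, hy2, _⟩ := h3 x
      exact ⟨y, hy1, hy2⟩
    · obtain ⟨y, hy1, hy2, hy3⟩ := h3 x
      calc dist (g x) (g' x) ≤ dist (g x) y + dist y (g' x) := dist_triangle _ _ _
        _ ≤ (2:ℝ)⁻¹ ^ m + (2:ℝ)⁻¹ ^ (m + 1) := by
            rw [dist_comm (g x) y]; exact add_le_add hy3 hy2
        _ ≤ 2 * (2:ℝ)⁻¹ ^ m := by rw [pow_succ]; nlinarith [pow_pos (by norm_num : (0:ℝ) < 2⁻¹) m]
  choose g0 hg0 using hbase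
  choose! next hnext hdist using hstep
  set F : ℕ → X → K := fun m => Nat.rec g0 (fun m g => next m g) m with hF
  have hQF : ∀ m, Q m (F m) := by
    intro m
    induction m with
    | zero => exact hg0
    | succ m ih => exact hnext m (F m) ih
  have hdistF : ∀ m x, dist (F m x) (F (m + 1) x) ≤ 2 * (2:ℝ)⁻¹ ^ m :=
    fun m x => hdist m (F m) (hQF m) x
  have hcauchy : ∀ x, CauchySeq fun m => F m x := by
    intro x
    exact cauchySeq_of_le_geometric (2:ℝ)⁻¹ 2 (by norm_num) fun m => hdistF m x
  have hconv : ∀ x, ∃ z, Tendsto (fun m => F m x) atTop (𝓝 z) :=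
    fun x => cauchySeq_tendsto_of_complete (hcauchy x)
  choose f hf using hconv
  refine ⟨f, ?_, ?_⟩
  · exact measurable_of_tendsto_metrizable (fun m => (hQF m).1) (tendsto_pi_nhds.2 hf)
  · intro x
    choose y hyG hyd using fun m => (hQF m).2.2 x
    have hty : Tendsto y atTop (𝓝 (f x)) := by
      have h0 : Tendsto (fun m => dist (y m) (f x)) atTop (𝓝 0) := by
        apply squeeze_zero (fun m => dist_nonneg)
          (fun m => (dist_triangle (y m) (F m x) (f x)).trans
            (add_le_add_left (hyd m) _))
        have h1 : Tendsto (fun m => ((2:ℝ)⁻¹ ^ m)) atTop (𝓝 0) :=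
          tendsto_pow_atTop_nhds_zero_of_lt_one (by norm_num) (by norm_num)
        have h2 : Tendsto (fun m => dist (F m x) (f x)) atTop (𝓝 0) := by
          simpa using ((hf x).dist (tendsto_const_nhds (x := f x)))
        simpa using h1.add h2
      exact tendsto_iff_dist_tendsto_zero.mpr h0
    exact (hclosed x).mem_of_tendsto hty (Filter.Eventually.of_forall hyG)

section Diag

variable (n : ℕ)

local instance : BorelSpace (Matrix (Fin n) (Fin n) ℝ) :=
  ⟨(inferInstance : BorelSpace (Fin n → Fin n → ℝ)).measurable_eq⟩

/-- the orthogonal matrices, as a subset of the function type -/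
def Od : Set (Fin n → Fin n → ℝ) := {B | Matrix.of B ∈ Matrix.orthogonalGroup (Fin n) ℝ}

lemma continuous_of_fn : Continuous (fun B : (Fin n → Fin n → ℝ) =>
    (Matrix.of B : Matrix (Fin n) (Fin n) ℝ)) :=
  continuous_matrix fun i j => (continuous_apply j).comp (continuous_apply i)

lemma isClosed_Od : IsClosed (Od n) := by
  have h1 : Od n = (fun B : (Fin n → Fin n → ℝ) =>
      (Matrix.of B * star (Matrix.of B) : Matrix (Fin n) (Fin n) ℝ)) ⁻¹' {1} := by
    ext B
    simp only [Od, Set.mem_setOf_eq, Set.mem_preimage, Set.mem_singleton_iff,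
      Matrix.mem_orthogonalGroup_iff, Matrix.star_eq_conjTranspose,
      Matrix.conjTranspose_eq_transpose_of_trivial]
  rw [h1]
  apply IsClosed.preimage
  · have := (continuous_of_fn n)
    exact this.matrix_mul (by
      simpa [Matrix.star_eq_conjTranspose] using this.matrix_conjTranspose)
  · exact isClosed_singleton

lemma Od_subset_ball : Od n ⊆ Metric.closedBall 0 1 := by
  intro B hB
  have h1 : (Matrix.of B * star (Matrix.of B) : Matrix (Fin n) (Fin n) ℝ) = 1 := by
    have := Matrix.mem_orthogonalGroup_iff (n := Fin n) (R := ℝ) (A := Matrix.of B)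
    rw [Matrix.star_eq_conjTranspose, Matrix.conjTranspose_eq_transpose_of_trivial]
    exact this.mp hB
  have hentry : ∀ i j, |B i j| ≤ 1 := by
    intro i j
    have h2 : (Matrix.of B * star (Matrix.of B) : Matrix (Fin n) (Fin n) ℝ) i i = 1 := by
      rw [h1, Matrix.one_apply_eq]
    rw [Matrix.mul_apply] at h2
    have h3 : ∀ k, (star (Matrix.of B) : Matrix (Fin n) (Fin n) ℝ) k i = B i k := by
      intro k
      simp [Matrix.star_eq_conjTranspose, Matrix.conjTranspose_apply]
    rw [Finset.sum_congr rfl (fun k _ => by rw [h3])] at h2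
    have h4 : B i j * B i j ≤ ∑ k, Matrix.of B i k * B i k := by
      apply Finset.single_le_sum (f := fun k => Matrix.of B i k * B i k)
        (fun k _ => mul_self_nonneg _) (Finset.mem_univ j)
    rw [h2] at h4
    exact abs_le_one_iff_mul_self_le_one.mpr h4
  rw [Metric.mem_closedBall]
  rw [dist_pi_le_iff zero_le_one]
  intro i
  rw [dist_pi_le_iff zero_le_one]
  intro j
  simpa [Real.dist_eq] using hentry i j

lemma isCompact_Od : IsCompact (Od n) :=
  (isCompact_closedBall (0 : Fin n → Fin n → ℝ) 1).of_isClosed_subset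
    (isClosed_Od n) (Od_subset_ball n)

instance : CompactSpace (Od n) := isCompact_iff_compactSpace.mp (isCompact_Od n)

instance : Nonempty (Od n) := by
  refine ⟨⟨fun i j => (1 : Matrix (Fin n) (Fin n) ℝ) i j, ?_⟩⟩
  exact one_mem (Matrix.orthogonalGroup (Fin n) ℝ)

lemma isClosed_isDiag : IsClosed {m : Matrix (Fin n) (Fin n) ℝ | m.IsDiag} := by
  have h1 : {m : Matrix (Fin n) (Fin n) ℝ | m.IsDiag}
      = ⋂ i, ⋂ j, {m : Matrix (Fin n) (Fin n) ℝ | i ≠ j → m i j = 0} := by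
    ext m
    simp only [Set.mem_setOf_eq, Set.mem_iInter, Matrix.IsDiag]
    exact ⟨fun h i j hij => h hij, fun h i j hij => h i j hij⟩
  rw [h1]
  refine isClosed_iInter fun i => isClosed_iInter fun j => ?_
  by_cases h : i = j
  · have h2 : {m : Matrix (Fin n) (Fin n) ℝ | i ≠ j → m i j = 0} = Set.univ := by
      ext m; simp [h]
    rw [h2]; exact isClosed_univ
  · have h2 : {m : Matrix (Fin n) (Fin n) ℝ | i ≠ j → m i j = 0}
        = {m : Matrix (Fin n) (Fin n) ℝ | m i j = 0} := by
      ext m; simp [h]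
    rw [h2]
    exact isClosed_eq (continuous_id.matrix_elem i j) continuous_const

lemma isClosed_posSemidef : IsClosed {A : Matrix (Fin n) (Fin n) ℝ | A.PosSemidef} := by
  have h1 : {A : Matrix (Fin n) (Fin n) ℝ | A.PosSemidef}
      = {A : Matrix (Fin n) (Fin n) ℝ | Aᴴ = A} ∩
        ⋂ v : Fin n → ℝ, {A | 0 ≤ dotProduct (star v) (A *ᵥ v)} := by
    ext A
    simp only [Set.mem_setOf_eq, Set.mem_inter_iff, Set.mem_iInter,
      Matrix.posSemidef_iff_dotProduct_mulVec, Matrix.IsHermitian]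
  rw [h1]
  refine (isClosed_eq continuous_id.matrix_conjTranspose continuous_id).inter
    (isClosed_iInter fun v => ?_)
  exact isClosed_le continuous_const
    (continuous_const.dotProduct (continuous_id.matrix_mulVec continuous_const))

/-- the graph set used for the selection -/
def Gset : Set (Matrix (Fin n) (Fin n) ℝ × Od n) :=
  {p | p.1.PosSemidef →
    ((Matrix.of ↑p.2 : Matrix (Fin n) (Fin n) ℝ) * p.1 * (Matrix.of ↑p.2)ᵀ).IsDiag}

lemma continuous_phi : Continuous (fun p : Matrix (Fin n) (Fin n) ℝ × Od n =>
    (Matrix.of ↑p.2 : Matrix (Fin n) (Fin n) ℝ) * p.1 * (Matrix.of ↑p.2)ᵀ) := by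
  have hc : Continuous (fun p : Matrix (Fin n) (Fin n) ℝ × Od n =>
      (Matrix.of ↑p.2 : Matrix (Fin n) (Fin n) ℝ)) :=
    (continuous_of_fn n).comp (continuous_subtype_val.comp continuous_snd)
  exact (hc.matrix_mul continuous_fst).matrix_mul hc.matrix_transpose

lemma isClosed_Dset : IsClosed {p : Matrix (Fin n) (Fin n) ℝ × Od n |
    ((Matrix.of ↑p.2 : Matrix (Fin n) (Fin n) ℝ) * p.1 * (Matrix.of ↑p.2)ᵀ).IsDiag} :=
  (isClosed_isDiag n).preimage (continuous_phi n)

lemma exists_diagonalizer :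
    ∃ g : Matrix (Fin n) (Fin n) ℝ → Matrix (Fin n) (Fin n) ℝ,
      Measurable g ∧ (∀ A, g A ∈ Matrix.orthogonalGroup (Fin n) ℝ) ∧
      ∀ A : Matrix (Fin n) (Fin n) ℝ, A.PosSemidef → (g A * A * (g A)ᵀ).IsDiag := by
  have hmeasG : ∀ C : Set (Od n), IsClosed C →
      MeasurableSet {x | ∃ y ∈ C, (x, y) ∈ Gset n} := by
    intro C hC
    have hset : {x | ∃ y ∈ C, (x, y) ∈ Gset n}
        = ({A : Matrix (Fin n) (Fin n) ℝ | A.PosSemidef}ᶜ ∩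
            {_x : Matrix (Fin n) (Fin n) ℝ | C.Nonempty}) ∪
          (Prod.fst '' ({p : Matrix (Fin n) (Fin n) ℝ × Od n |
            ((Matrix.of ↑p.2 : Matrix (Fin n) (Fin n) ℝ) * p.1 * (Matrix.of ↑p.2)ᵀ).IsDiag}
            ∩ (Set.univ ×ˢ C))) := by
      ext x
      simp only [Set.mem_setOf_eq, Set.mem_union, Set.mem_inter_iff, Set.mem_compl_iff,
        Set.mem_image, Set.mem_prod, Set.mem_univ, true_and]
      constructor
      · rintro ⟨y, hyC, hyG⟩
        by_cases hx : x.PosSemidef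
        · exact Or.inr ⟨(x, y), ⟨hyG hx, hyC⟩, rfl⟩
        · exact Or.inl ⟨hx, ⟨y, hyC⟩⟩
      · rintro (⟨hx, hif⟩ | ⟨⟨a, y⟩, ⟨hD, hyC⟩, rfl⟩)
        · by_cases hCne : C.Nonempty
          · obtain ⟨y, hy⟩ := hCne
            exact ⟨y, hy, fun h => absurd h hx⟩
          · exact absurd hif hCne
        · exact ⟨y, hyC, fun _ => hD⟩
    rw [hset]
    refine MeasurableSet.union ?_ ?_
    · refine ((isClosed_posSemidef n).measurableSet.compl).inter ?_
      by_cases hCne : C.Nonempty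
      · have : {_x : Matrix (Fin n) (Fin n) ℝ | C.Nonempty} = Set.univ := by
          ext; simp [hCne]
        rw [this]; exact MeasurableSet.univ
      · have : {_x : Matrix (Fin n) (Fin n) ℝ | C.Nonempty} = ∅ := by
          ext; simp [hCne]
        rw [this]; exact MeasurableSet.empty
    · exact (isClosedMap_fst_of_compactSpace _
        ((isClosed_Dset n).inter (isClosed_univ.prod hC))).measurableSet
  have hclosedG : ∀ x, IsClosed {y : Od n | (x, y) ∈ Gset n} := by
    intro x
    by_cases hx : x.PosSemidef
    · have : {y : Od n | (x, y) ∈ Gset n} = {y : Od n |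
          ((Matrix.of ↑y : Matrix (Fin n) (Fin n) ℝ) * x * (Matrix.of ↑y)ᵀ).IsDiag} := by
        ext y; simp [Gset, hx]
      rw [this]
      exact (isClosed_Dset n).preimage ((Continuous.prodMk_right x))
    · have : {y : Od n | (x, y) ∈ Gset n} = Set.univ := by
        ext y; simp [Gset, hx]
      rw [this]; exact isClosed_univ
  have hneG : ∀ x, ∃ y : Od n, (x, y) ∈ Gset n := by
    intro x
    by_cases hx : x.PosSemidef
    · have hH : x.IsHermitian := hx.1
      set U : Matrix (Fin n) (Fin n) ℝ := ↑(hH.eigenvectorUnitary) with hU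
      have hUmem : U ∈ Matrix.unitaryGroup (Fin n) ℝ := hH.eigenvectorUnitary.2
      have hBmem : star U ∈ Matrix.orthogonalGroup (Fin n) ℝ := Unitary.star_mem hUmem
      refine ⟨⟨fun i j => star U i j, by show Matrix.of _ ∈ _; exact hBmem⟩, fun _ => ?_⟩
      have hO : (Matrix.of (fun i j => star U i j) : Matrix (Fin n) (Fin n) ℝ) = star U := rfl
      rw [hO]
      have ht : (star U)ᵀ = U := by
        rw [Matrix.star_eq_conjTranspose, Matrix.conjTranspose_eq_transpose_of_trivial,
          Matrix.transpose_transpose]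
      rw [ht]
      have := hH.conjStarAlgAut_star_eigenvectorUnitary
      rw [Unitary.conjStarAlgAut_apply, Unitary.coe_star, star_star] at this
      rw [← hU] at this
      rw [this]
      exact Matrix.isDiag_diagonal _
    · exact ⟨Classical.arbitrary _, fun h => absurd h hx⟩
  obtain ⟨f, hf, hfG⟩ := krn_selection (Gset n) hmeasG hclosedG hneG
  exact ⟨fun A => Matrix.of ↑(f A), measurable_subtype_coe.comp hf, fun A => (f A).2,
    fun A hA => hfG A hA⟩

end Diag

/-- Let `A` be a predictable process taking values in the symmetric positive
semidefinite `n × n` matrices. Then there is a predictable process `B` taking values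
in the orthogonal group `O(n)` such that `B_t · A_t · B_tᵀ` is diagonal for all `t`,
almost surely. -/
theorem predictable_diagonalization {Ω : Type*} [m0 : MeasurableSpace Ω]
    (P : Measure Ω) [IsProbabilityMeasure P] (ℱ : Filtration ℝ≥0 m0) (n : ℕ)
    (A : ℝ≥0 → Ω → Matrix (Fin n) (Fin n) ℝ)
    (hA : Predictable ℱ A)
    (hpsd : ∀ t ω, (A t ω).PosSemidef) :
    ∃ B : ℝ≥0 → Ω → Matrix (Fin n) (Fin n) ℝ,
      Predictable ℱ B ∧
      (∀ t ω, B t ω ∈ Matrix.orthogonalGroup (Fin n) ℝ) ∧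
      ∀ᵐ ω ∂P, ∀ t, (B t ω * A t ω * (B t ω)ᵀ).IsDiag := by
  obtain ⟨g, hg, hgO, hgD⟩ := exists_diagonalizer n
  refine ⟨fun t ω => g (A t ω), ?_, fun t ω => hgO _, ?_⟩
  · exact hg.comp hA
  · exact ae_of_all _ fun ω t => hgD _ (hpsd t ω)
end
end

section
/- Let Z be a continuous ℝ^n-valued semimartingale with diagonal quadratic covariation A^{ij}_t = ∫₀ᵗ Ã^{ii}_s δ^{ij} ds. If Z is invariant in law under random rotations, then all diagonal entries are equal: there is a predictable process F_t with A^{ij}_t = F_t δ^{ij}. -/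
open MeasureTheory ProbabilityTheory Filter Matrix
open scoped NNReal

noncomputable section

/-- `W` is a standard `n`-dimensional Brownian motion (started at `0`) under `P`. -/
def IsStdBM {Ω : Type*} [MeasurableSpace Ω] (P : Measure Ω) (n : ℕ)
    (W : ℝ≥0 → Ω → Fin n → ℝ) : Prop :=
  (∀ t, Measurable (W t)) ∧
  (∀ ω, W 0 ω = 0) ∧
  (∀ ω, Continuous fun t => W t ω) ∧
  (∀ s t : ℝ≥0, s ≤ t → ∀ i : Fin n,
      P.map (fun ω => W t ω i - W s ω i) = gaussianReal 0 (t - s)) ∧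
  (∀ (m : ℕ) (t : Fin (m + 1) → ℝ≥0), Monotone t →
      iIndepFun
        (fun p : Fin m × Fin n => fun ω => W (t p.1.succ) ω p.2 - W (t p.1.castSucc) ω p.2) P)

/-- `M` is a local martingale w.r.t. the filtration `ℱ`: there is a localizing
sequence of stopping times increasing to infinity making the stopped processes
martingales. -/
def IsLocalMartingale {Ω : Type*} [m0 : MeasurableSpace Ω] (ℱ : Filtration ℝ≥0 m0)
    (P : Measure Ω) (M : ℝ≥0 → Ω → ℝ) : Prop :=
  ∃ σ : ℕ → Ω → ℝ≥0,
    (∀ k, IsStoppingTime ℱ (fun ω => (σ k ω : WithTop ℝ≥0))) ∧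
    (∀ ω k, σ k ω ≤ σ (k + 1) ω) ∧
    (∀ ω, Tendsto (fun k => σ k ω) atTop atTop) ∧
    ∀ k, Martingale (fun t ω => M (min t (σ k ω)) ω) ℱ P

/-- `A` is the quadratic covariation of `X` and `Y`: the dyadic Riemann sums of
products of increments converge in probability to `A t` for every `t`. -/
def HasQuadCov {Ω : Type*} [MeasurableSpace Ω] (P : Measure Ω)
    (X Y A : ℝ≥0 → Ω → ℝ) : Prop :=
  ∀ t : ℝ≥0, TendstoInMeasure P
    (fun m ω => ∑ k ∈ Finset.range (2 ^ m),
      (X (((k : ℝ≥0) + 1) * t / 2 ^ m) ω - X ((k : ℝ≥0) * t / 2 ^ m) ω) *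
        (Y (((k : ℝ≥0) + 1) * t / 2 ^ m) ω - Y ((k : ℝ≥0) * t / 2 ^ m) ω))
    atTop (fun ω => A t ω)

/-- `Z` is invariant in law under predictable random rotations: for every
piecewise-constant predictable process `B` with values in the orthogonal group
`O(n)` (constant equal to an `ℱ (σ k)`-measurable orthogonal matrix `C k` on each
stochastic interval `(σ k, σ (k+1)]`), the stochastic integral
`Z'_t = ∫₀ᵗ B dZ = Σₖ C k · (Z (σ (k+1) ∧ t) − Z (σ k ∧ t))` has the same law as `Z`. -/
def RotationInvariant {Ω : Type*} [m0 : MeasurableSpace Ω] (P : Measure Ω) (n : ℕ)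
    (ℱ : Filtration ℝ≥0 m0) (Z : ℝ≥0 → Ω → Fin n → ℝ) : Prop :=
  ∀ (σ : ℕ → Ω → ℝ≥0) (C : ℕ → Ω → Matrix (Fin n) (Fin n) ℝ),
    (∀ ω, σ 0 ω = 0) →
    (∀ ω k, σ k ω ≤ σ (k + 1) ω) →
    (∀ ω, Tendsto (fun k => σ k ω) atTop atTop) →
    (∀ k, IsStoppingTime ℱ (fun ω => (σ k ω : WithTop ℝ≥0))) →
    (∀ k ω, C k ω ∈ Matrix.orthogonalGroup (Fin n) ℝ) →
    (∀ (k : ℕ) (S : Set (Matrix (Fin n) (Fin n) ℝ)), MeasurableSet S →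
      ∀ t : ℝ≥0, MeasurableSet[ℱ t] (C k ⁻¹' S ∩ {ω | σ k ω ≤ t})) →
    P.map (fun ω => fun (t : ℝ≥0) (i : Fin n) =>
        ∑' k : ℕ, ∑ j, C k ω i j *
          (Z (min (σ (k + 1) ω) t) ω j - Z (min (σ k ω) t) ω j))
      = P.map (fun ω => fun (t : ℝ≥0) (i : Fin n) => Z t ω i)


section Aux

open scoped ENNReal

variable {Ω : Type*} [m0 : MeasurableSpace Ω] (ℱ : Filtration ℝ≥0 m0)

lemma predictableSigma_le :
    predictableSigma ℱ ≤ (inferInstance : MeasurableSpace (ℝ≥0 × Ω)) := by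
  refine MeasurableSpace.generateFrom_le ?_
  rintro S (⟨s, t, A, hst, hA, rfl⟩ | ⟨A, hA, rfl⟩)
  · exact MeasurableSet.prod measurableSet_Ioc (ℱ.le s A hA)
  · exact MeasurableSet.prod (measurableSet_singleton 0) (ℱ.le 0 A hA)

lemma measurableSet_pred_Ioc_prod (s t : ℝ≥0) (A : Set Ω) (hA : MeasurableSet[ℱ s] A) :
    MeasurableSet[predictableSigma ℱ] (Set.Ioc s t ×ˢ A) := by
  by_cases h : s < t
  · exact MeasurableSpace.measurableSet_generateFrom (Or.inl ⟨s, t, A, h, hA, rfl⟩)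
  · rw [Set.Ioc_eq_empty h, Set.empty_prod]
    exact @MeasurableSet.empty _ (predictableSigma ℱ)

lemma measurableSet_pred_singleton_prod (A : Set Ω) (hA : MeasurableSet[ℱ 0] A) :
    MeasurableSet[predictableSigma ℱ] (({0} : Set ℝ≥0) ×ˢ A) :=
  MeasurableSpace.measurableSet_generateFrom (Or.inr ⟨A, hA, rfl⟩)

lemma measurableSet_pred_Ioi_prod (s : ℝ≥0) (A : Set Ω) (hA : MeasurableSet[ℱ s] A) :
    MeasurableSet[predictableSigma ℱ] (Set.Ioi s ×ˢ A) := by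
  have : Set.Ioi s ×ˢ A = ⋃ m : ℕ, Set.Ioc s (s + m + 1) ×ˢ A := by
    ext ⟨u, ω⟩
    simp only [Set.mem_prod, Set.mem_Ioi, Set.mem_Ioc, Set.mem_iUnion]
    constructor
    · rintro ⟨hu, hω⟩
      refine ⟨⌈(u : ℝ≥0)⌉₊, ⟨⟨hu, ?_⟩, hω⟩⟩
      calc u ≤ (⌈(u : ℝ≥0)⌉₊ : ℝ≥0) := Nat.le_ceil u
        _ ≤ s + ⌈(u : ℝ≥0)⌉₊ := self_le_add_left _ _
        _ ≤ s + ⌈(u : ℝ≥0)⌉₊ + 1 := le_self_add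
    · rintro ⟨m, ⟨hu, _⟩, hω⟩
      exact ⟨hu, hω⟩
  rw [this]
  exact MeasurableSet.iUnion fun m => measurableSet_pred_Ioc_prod ℱ s (s + m + 1) A hA

lemma measurable_pred_fst :
    @Measurable (ℝ≥0 × Ω) ℝ≥0 (predictableSigma ℱ) _ Prod.fst := by
  refine measurable_of_Iic (mδ := predictableSigma ℱ) (f := Prod.fst) ?_
  intro x
  have h : (Prod.fst ⁻¹' Set.Iic x : Set (ℝ≥0 × Ω)) =
      ({0} : Set ℝ≥0) ×ˢ (Set.univ : Set Ω) ∪ Set.Ioc 0 x ×ˢ (Set.univ : Set Ω) := by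
    ext ⟨u, ω⟩
    simp only [Set.mem_preimage, Set.mem_Iic, Set.mem_union, Set.mem_prod, Set.mem_singleton_iff,
      Set.mem_univ, and_true, Set.mem_Ioc]
    constructor
    · intro hu
      rcases eq_or_lt_of_le (zero_le : (0:ℝ≥0) ≤ u) with h0 | h0
      · exact Or.inl h0.symm
      · exact Or.inr ⟨h0, hu⟩
    · rintro (rfl | ⟨_, hu⟩)
      · exact (zero_le : (0:ℝ≥0) ≤ x)
      · exact hu
  rw [h]
  exact MeasurableSet.union (measurableSet_pred_singleton_prod ℱ _ MeasurableSet.univ)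
    (measurableSet_pred_Ioc_prod ℱ 0 x _ MeasurableSet.univ)

/-- The key measure computation: for a predictable set `S`, the map
`(t, ω) ↦ volume {s ∈ (0, t] : (s.toNNReal, ω) ∈ S}` is predictable. -/
lemma measurable_pred_sectionVolume {S : Set (ℝ≥0 × Ω)}
    (hS : MeasurableSet[predictableSigma ℱ] S) :
    @Measurable (ℝ≥0 × Ω) ℝ≥0∞ (predictableSigma ℱ) _
      (fun p => volume ((fun s : ℝ => (s.toNNReal, p.2)) ⁻¹' S ∩ Set.Ioc (0 : ℝ) (p.1 : ℝ))) := by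
  have hsec : ∀ (T : Set (ℝ≥0 × Ω)), MeasurableSet T → ∀ ω : Ω,
      MeasurableSet ((fun s : ℝ => (s.toNNReal, ω)) ⁻¹' T) := by
    intro T hT ω
    exact (measurable_real_toNNReal.prodMk measurable_const) hT
  refine MeasurableSpace.induction_on_inter (m := predictableSigma ℱ)
    (C := fun S _ => @Measurable (ℝ≥0 × Ω) ℝ≥0∞ (predictableSigma ℱ) _
      (fun p => volume ((fun s : ℝ => (s.toNNReal, p.2)) ⁻¹' S ∩ Set.Ioc (0 : ℝ) (p.1 : ℝ))))
    rfl ?_ ?_ ?_ ?_ ?_ _ hS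
  · -- π-system
    rintro S (⟨s1, t1, A1, h1, hA1, rfl⟩ | ⟨A1, hA1, rfl⟩)
        T hT hne <;>
      rcases hT with ⟨s2, t2, A2, h2, hA2, rfl⟩ | ⟨A2, hA2, rfl⟩
    · rw [Set.prod_inter_prod, Set.Ioc_inter_Ioc] at hne ⊢
      obtain ⟨⟨u, ω⟩, ⟨hu1, hu2⟩, hω⟩ := hne
      refine Or.inl ⟨max s1 s2, min t1 t2, A1 ∩ A2, lt_of_lt_of_le hu1 hu2, ?_, rfl⟩
      exact MeasurableSet.inter (ℱ.mono (le_max_left s1 s2) _ hA1)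
        (ℱ.mono (le_max_right s1 s2) _ hA2)
    · exfalso
      obtain ⟨⟨u, ω⟩, ⟨⟨hu1, _⟩, _⟩, h0, _⟩ := hne
      rw [Set.mem_singleton_iff] at h0
      exact absurd (h0 ▸ hu1) (by simp)
    · exfalso
      obtain ⟨⟨u, ω⟩, ⟨h0, _⟩, ⟨hu1, _⟩, _⟩ := hne
      rw [Set.mem_singleton_iff] at h0
      exact absurd (h0 ▸ hu1) (by simp)
    · rw [Set.prod_inter_prod, Set.inter_self]
      exact Or.inr ⟨A1 ∩ A2, MeasurableSet.inter hA1 hA2, rfl⟩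
  · -- empty
    simp only [Set.preimage_empty, Set.empty_inter, measure_empty]
    exact @measurable_const _ _ _ (predictableSigma ℱ) _
  · -- basic
    rintro S (⟨a, b, A, hab, hA, rfl⟩ | ⟨A, hA, rfl⟩)
    · have hpre : ∀ ω : Ω, ω ∈ A →
          (fun s : ℝ => (s.toNNReal, ω)) ⁻¹' (Set.Ioc a b ×ˢ A) = Set.Ioc (a : ℝ) (b : ℝ) := by
        intro ω hω
        ext s
        simp only [Set.mem_preimage, Set.mem_prod, Set.mem_Ioc, hω, and_true]
        rw [Real.lt_toNNReal_iff_coe_lt, Real.toNNReal_le_iff_le_coe]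
      have hpre' : ∀ ω : Ω, ω ∉ A →
          (fun s : ℝ => (s.toNNReal, ω)) ⁻¹' (Set.Ioc a b ×ˢ A) = ∅ := by
        intro ω hω
        ext s
        simp [hω]
      have heq : (fun p : ℝ≥0 × Ω =>
          volume ((fun s : ℝ => (s.toNNReal, p.2)) ⁻¹' (Set.Ioc a b ×ˢ A) ∩
            Set.Ioc (0 : ℝ) (p.1 : ℝ))) =
          fun p : ℝ≥0 × Ω => Set.indicator (Set.Ioi a ×ˢ A)
            (fun q : ℝ≥0 × Ω => ENNReal.ofReal (min (q.1 : ℝ) b - a)) p := by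
        funext p
        obtain ⟨t, ω⟩ := p
        by_cases hω : ω ∈ A
        · rw [hpre ω hω, Set.Ioc_inter_Ioc]
          have hmax : max (a : ℝ) 0 = (a : ℝ) := max_eq_left a.coe_nonneg
          rw [hmax, Real.volume_Ioc]
          by_cases ht : a < t
          · rw [Set.indicator_of_mem (by exact ⟨ht, hω⟩)]
            congr 1
            rw [min_comm]
          · rw [Set.indicator_of_notMem (by simp [ht, Set.mem_prod])]
            rw [ENNReal.ofReal_eq_zero]
            have : min (b : ℝ) (t : ℝ) ≤ (a : ℝ) := by
              refine le_trans (min_le_right _ _) ?_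
              exact_mod_cast not_lt.mp ht
            linarith
        · rw [hpre' ω hω, Set.empty_inter, measure_empty,
            Set.indicator_of_notMem (by simp [hω, Set.mem_prod])]
      rw [heq]
      refine Measurable.indicator (m := predictableSigma ℱ) ?_
        (measurableSet_pred_Ioi_prod ℱ a A hA)
      refine ENNReal.measurable_ofReal.comp ?_
      have h1 : @Measurable (ℝ≥0 × Ω) ℝ (predictableSigma ℱ) _ (fun q => (q.1 : ℝ)) :=
        measurable_subtype_coe.comp (measurable_pred_fst ℱ)
      exact (h1.min measurable_const).sub measurable_const
    · have hpre : ∀ ω : Ω,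
          ((fun s : ℝ => (s.toNNReal, ω)) ⁻¹' (({0} : Set ℝ≥0) ×ˢ A)) ∩
            Set.Ioc (0 : ℝ) ((0 : ℝ≥0) : ℝ) = ∅ := by
        intro ω; simp
      have heq : (fun p : ℝ≥0 × Ω =>
          volume ((fun s : ℝ => (s.toNNReal, p.2)) ⁻¹' (({0} : Set ℝ≥0) ×ˢ A) ∩
            Set.Ioc (0 : ℝ) (p.1 : ℝ))) = fun _ => (0 : ℝ≥0∞) := by
        funext p
        have : (fun s : ℝ => (s.toNNReal, p.2)) ⁻¹' (({0} : Set ℝ≥0) ×ˢ A) ∩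
            Set.Ioc (0 : ℝ) (p.1 : ℝ) = ∅ := by
          ext s
          simp only [Set.mem_inter_iff, Set.mem_preimage, Set.mem_prod, Set.mem_singleton_iff,
            Set.mem_Ioc, Set.mem_empty_iff_false, iff_false]
          rintro ⟨⟨hs0, -⟩, hs1, -⟩
          rw [Real.toNNReal_eq_zero] at hs0
          linarith
        rw [this, measure_empty]
      rw [heq]
      exact @measurable_const _ _ _ (predictableSigma ℱ) _
  · -- compl
    intro S hSm hS
    have hle : ∀ p : ℝ≥0 × Ω,
        volume ((fun s : ℝ => (s.toNNReal, p.2)) ⁻¹' S ∩ Set.Ioc (0 : ℝ) (p.1 : ℝ)) ≠ ⊤ := by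
      intro p
      refine ne_top_of_le_ne_top ?_ (measure_mono Set.inter_subset_right)
      rw [Real.volume_Ioc]
      exact ENNReal.ofReal_ne_top
    have heq : ∀ p : ℝ≥0 × Ω,
        volume ((fun s : ℝ => (s.toNNReal, p.2)) ⁻¹' Sᶜ ∩ Set.Ioc (0 : ℝ) (p.1 : ℝ)) =
          ENNReal.ofReal (p.1 : ℝ) -
            volume ((fun s : ℝ => (s.toNNReal, p.2)) ⁻¹' S ∩ Set.Ioc (0 : ℝ) (p.1 : ℝ)) := by
      intro p
      have hsub : (fun s : ℝ => (s.toNNReal, p.2)) ⁻¹' S ∩ Set.Ioc (0 : ℝ) (p.1 : ℝ) ⊆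
          Set.Ioc (0 : ℝ) (p.1 : ℝ) := Set.inter_subset_right
      have hd : (fun s : ℝ => (s.toNNReal, p.2)) ⁻¹' Sᶜ ∩ Set.Ioc (0 : ℝ) (p.1 : ℝ) =
          Set.Ioc (0 : ℝ) (p.1 : ℝ) \
            ((fun s : ℝ => (s.toNNReal, p.2)) ⁻¹' S ∩ Set.Ioc (0 : ℝ) (p.1 : ℝ)) := by
        ext s
        simp only [Set.mem_inter_iff, Set.mem_preimage, Set.mem_compl_iff, Set.mem_diff]
        tauto
      rw [hd, measure_diff hsub
        ((hsec S (predictableSigma_le ℱ S hSm) p.2).inter measurableSet_Ioc).nullMeasurableSet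
        (hle p), Real.volume_Ioc, sub_zero]
    simp only [heq]
    refine Measurable.sub (m := predictableSigma ℱ) ?_ hS
    exact ENNReal.measurable_ofReal.comp
      (measurable_subtype_coe.comp (measurable_pred_fst ℱ))
  · -- union
    intro f hdisj hfm hf
    have heq : ∀ p : ℝ≥0 × Ω,
        volume ((fun s : ℝ => (s.toNNReal, p.2)) ⁻¹' (⋃ i, f i) ∩ Set.Ioc (0 : ℝ) (p.1 : ℝ)) =
          ∑' i, volume ((fun s : ℝ => (s.toNNReal, p.2)) ⁻¹' (f i) ∩
            Set.Ioc (0 : ℝ) (p.1 : ℝ)) := by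
      intro p
      rw [Set.preimage_iUnion, Set.iUnion_inter]
      refine measure_iUnion ?_ ?_
      · intro i j hij
        refine Set.disjoint_left.mpr ?_
        rintro s ⟨hsi, hs⟩ ⟨hsj, _⟩
        exact Set.disjoint_left.mp (hdisj hij) hsi hsj
      · intro i
        exact (hsec (f i) (predictableSigma_le ℱ (f i) (hfm i)) p.2).inter measurableSet_Ioc
    simp only [heq]
    exact @Measurable.ennreal_tsum _ (predictableSigma ℱ) _ _ _ hf

/-- Predictability of `(t, ω) ↦ ∫⁻_{(0,t]} h (s, ω) ds` for predictable `h`. -/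
lemma measurable_pred_lintegral (h : ℝ≥0 × Ω → ℝ≥0∞)
    (hh : @Measurable _ _ (predictableSigma ℱ) _ h) :
    @Measurable (ℝ≥0 × Ω) ℝ≥0∞ (predictableSigma ℱ) _
      (fun p => ∫⁻ s in Set.Ioc (0 : ℝ) (p.1 : ℝ), h (s.toNNReal, p.2)) := by
  have hsec : ∀ (g : ℝ≥0 × Ω → ℝ≥0∞), @Measurable _ _ (predictableSigma ℱ) _ g → ∀ ω : Ω,
      Measurable fun s : ℝ => g (s.toNNReal, ω) := by
    intro g hg ω
    exact (hg.mono (predictableSigma_le ℱ) le_rfl).comp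
      (measurable_real_toNNReal.prodMk measurable_const)
  refine @Measurable.ennreal_induction (ℝ≥0 × Ω) (predictableSigma ℱ)
    (fun h => @Measurable (ℝ≥0 × Ω) ℝ≥0∞ (predictableSigma ℱ) _
      (fun p => ∫⁻ s in Set.Ioc (0 : ℝ) (p.1 : ℝ), h (s.toNNReal, p.2))) ?_ ?_ ?_ h hh
  · -- indicator
    intro c S hSm
    have hpre : ∀ ω : Ω, MeasurableSet ((fun s : ℝ => (s.toNNReal, ω)) ⁻¹' S) := fun ω =>
      (measurable_real_toNNReal.prodMk measurable_const) (predictableSigma_le ℱ S hSm)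
    have heq : ∀ p : ℝ≥0 × Ω,
        (∫⁻ s in Set.Ioc (0 : ℝ) (p.1 : ℝ), S.indicator (fun _ => c) (s.toNNReal, p.2)) =
          c * volume ((fun s : ℝ => (s.toNNReal, p.2)) ⁻¹' S ∩ Set.Ioc (0 : ℝ) (p.1 : ℝ)) := by
      intro p
      have h1 : (fun s : ℝ => S.indicator (fun _ => c) (s.toNNReal, p.2)) =
          fun s : ℝ => c * Set.indicator ((fun s : ℝ => (s.toNNReal, p.2)) ⁻¹' S)
            (fun _ => (1 : ℝ≥0∞)) s := by
        funext s
        by_cases hs : (s.toNNReal, p.2) ∈ S <;>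
          simp [Set.indicator_apply, hs, Set.mem_preimage]
      rw [h1]
      rw [lintegral_const_mul c (Measurable.indicator measurable_const (hpre p.2))]
      congr 1
      have h2 : (fun s : ℝ => Set.indicator ((fun s : ℝ => (s.toNNReal, p.2)) ⁻¹' S)
          (fun _ => (1 : ℝ≥0∞)) s) = Set.indicator ((fun s : ℝ => (s.toNNReal, p.2)) ⁻¹' S)
          (1 : ℝ → ℝ≥0∞) := rfl
      rw [h2, lintegral_indicator_one (hpre p.2), Measure.restrict_apply (hpre p.2)]
    simp only [heq]
    exact Measurable.const_mul (measurable_pred_sectionVolume ℱ hSm) c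
  · -- add
    intro f g _ hf hg hPf hPg
    have heq : ∀ p : ℝ≥0 × Ω,
        (∫⁻ s in Set.Ioc (0 : ℝ) (p.1 : ℝ), (f + g) (s.toNNReal, p.2)) =
          (∫⁻ s in Set.Ioc (0 : ℝ) (p.1 : ℝ), f (s.toNNReal, p.2)) +
            ∫⁻ s in Set.Ioc (0 : ℝ) (p.1 : ℝ), g (s.toNNReal, p.2) := by
      intro p
      simp only [Pi.add_apply]
      exact lintegral_add_left (hsec f hf p.2) _
    simp only [heq]
    exact Measurable.add hPf hPg
  · -- iSup
    intro f hfm hmono hPf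
    have heq : ∀ p : ℝ≥0 × Ω,
        (∫⁻ s in Set.Ioc (0 : ℝ) (p.1 : ℝ), (⨆ m, f m (s.toNNReal, p.2))) =
          ⨆ m, ∫⁻ s in Set.Ioc (0 : ℝ) (p.1 : ℝ), f m (s.toNNReal, p.2) := by
      intro p
      exact lintegral_iSup (fun m => hsec (f m) (hfm m) p.2)
        (fun a b hab s => hmono hab _)
    simp only [heq]
    exact Measurable.iSup hPf

lemma tendstoInMeasure_comp_subseq {μ : Measure Ω} {f : ℕ → Ω → ℝ} {g : Ω → ℝ}
    (h : TendstoInMeasure μ f atTop g) {ns : ℕ → ℕ} (hns : StrictMono ns) :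
    TendstoInMeasure μ (fun i => f (ns i)) atTop g :=
  fun ε hε => (h ε hε).comp hns.tendsto_atTop

lemma posSemidef_diag_nonneg' {n : ℕ} {M : Matrix (Fin n) (Fin n) ℝ} (h : M.PosSemidef)
    (i : Fin n) : 0 ≤ M i i := by
  exact h.diag_nonneg

end Aux

/-- Let `Z` be a continuous `ℝⁿ`-valued semimartingale with diagonal absolutely
continuous quadratic covariation `[Zⁱ, Zʲ]_t = ∫₀ᵗ Atil s ds` (`Atil s` diagonal).
If `Z` is invariant in law under random rotations, then all the diagonal entries
coincide: there is a predictable process `F` with `[Zⁱ, Zʲ]_t = F_t δⁱʲ`. -/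
theorem quadCov_isotropic_of_rotationInvariant {Ω : Type*} [m0 : MeasurableSpace Ω]
    (P : Measure Ω) [IsProbabilityMeasure P] (n : ℕ) (hn : 0 < n)
    (Z : ℝ≥0 → Ω → Fin n → ℝ)
    (hZm : ∀ t, StronglyMeasurable (Z t))
    (hZcont : ∀ ω, Continuous fun t => Z t ω)
    (hsemi : ∃ b : ℝ≥0 → Ω → Fin n → ℝ,
      (∀ i, Adapted (Filtration.natural Z hZm) fun t ω => b t ω i) ∧
      (∀ ω i, Continuous fun t => b t ω i) ∧
      (∀ ω i, ∃ g h : ℝ≥0 → ℝ, Monotone g ∧ Monotone h ∧ ∀ t, b t ω i = g t - h t) ∧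
      (∀ i, IsLocalMartingale (Filtration.natural Z hZm) P fun t ω => Z t ω i - b t ω i))
    (Atil : ℝ≥0 → Ω → Matrix (Fin n) (Fin n) ℝ)
    (hApred : Predictable (Filtration.natural Z hZm) Atil)
    (hApsd : ∀ t ω, (Atil t ω).PosSemidef)
    (hAdiag : ∀ t ω, (Atil t ω).IsDiag)
    (hAqv : ∀ i j, HasQuadCov P (fun t ω => Z t ω i) (fun t ω => Z t ω j)
      (fun t ω => ∫ s in (0:ℝ)..(t:ℝ), Atil s.toNNReal ω i j))
    (hinv : RotationInvariant P n (Filtration.natural Z hZm) Z) :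
    ∃ F : ℝ≥0 → Ω → ℝ, Predictable (Filtration.natural Z hZm) F ∧
      ∀ (i j : Fin n) (t : ℝ≥0), ∀ᵐ ω ∂P,
        (∫ s in (0:ℝ)..(t:ℝ), Atil s.toNNReal ω i j)
          = if i = j then F t ω else 0 := by
  classical
  set ℱ := Filtration.natural Z hZm with hℱ
  set i0 : Fin n := ⟨0, hn⟩ with hi0
  have hAm : Measurable fun p : ℝ≥0 × Ω => Atil p.1 p.2 :=
    hApred.mono (predictableSigma_le ℱ) le_rfl
  have hAsec : ∀ (ω : Ω) (a b : Fin n), Measurable fun s : ℝ => Atil s.toNNReal ω a b := by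
    intro ω a b
    have h1 : Measurable fun s : ℝ≥0 => Atil s ω :=
      hAm.comp (measurable_id.prodMk measurable_const)
    have h2 : Measurable fun s : ℝ≥0 => Atil s ω a b :=
      (measurable_pi_apply b).comp ((measurable_pi_apply a).comp h1)
    exact h2.comp measurable_real_toNNReal
  -- Step 1: the core rotation argument
  have key : ∀ (i j : Fin n), i ≠ j → ∀ t : ℝ≥0, ∀ᵐ ω ∂P,
      (∫ s in (0:ℝ)..(t:ℝ), Atil s.toNNReal ω i i)
        = ∫ s in (0:ℝ)..(t:ℝ), Atil s.toNNReal ω j j := by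
    intro i j hij t
    set c : ℝ := (Real.sqrt 2)⁻¹ with hcdef
    have hc : c * c = 1 / 2 := by
      rw [hcdef, ← mul_inv, Real.mul_self_sqrt (by norm_num : (0:ℝ) ≤ 2)]
      norm_num
    set B : Matrix (Fin n) (Fin n) ℝ := fun a b =>
      if a = i then (if b = i then c else if b = j then -c else 0)
      else if a = j then (if b = i then c else if b = j then c else 0)
      else if a = b then 1 else 0 with hBdef
    -- row identities
    have hBi : ∀ v : Fin n → ℝ, (∑ l, B i l * v l) = c * v i - c * v j := by
      intro v
      have h1 : ∀ l, B i l * v l =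
          (if l = i then c * v l else 0) + (if l = j then -c * v l else 0) := by
        intro l
        simp only [hBdef, if_pos rfl]
        by_cases h1 : l = i
        · subst h1; simp [hij]
        · by_cases h2 : l = j
          · subst h2; simp [Ne.symm hij, h1]
          · simp [h1, h2]
      rw [Finset.sum_congr rfl fun l _ => h1 l, Finset.sum_add_distrib,
        Finset.sum_ite_eq' Finset.univ i (fun l => c * v l),
        Finset.sum_ite_eq' Finset.univ j (fun l => -c * v l)]
      simp only [Finset.mem_univ, if_pos]
      ring
    have hBj : ∀ v : Fin n → ℝ, (∑ l, B j l * v l) = c * v i + c * v j := by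
      intro v
      have h1 : ∀ l, B j l * v l =
          (if l = i then c * v l else 0) + (if l = j then c * v l else 0) := by
        intro l
        simp only [hBdef, if_neg (Ne.symm hij), if_pos rfl]
        by_cases h1 : l = i
        · subst h1; simp [hij]
        · by_cases h2 : l = j
          · subst h2; simp [Ne.symm hij, h1]
          · simp [h1, h2]
      rw [Finset.sum_congr rfl fun l _ => h1 l, Finset.sum_add_distrib,
        Finset.sum_ite_eq' Finset.univ i (fun l => c * v l),
        Finset.sum_ite_eq' Finset.univ j (fun l => c * v l)]
      simp only [Finset.mem_univ, if_pos]
    have hBo : ∀ a : Fin n, a ≠ i → a ≠ j → ∀ v : Fin n → ℝ, (∑ l, B a l * v l) = v a := by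
      intro a hai haj v
      simp only [hBdef, if_neg hai, if_neg haj]
      rw [Finset.sum_congr rfl (fun l (_ : l ∈ Finset.univ) => by
        rw [ite_mul, one_mul, zero_mul])]
      rw [Finset.sum_ite_eq Finset.univ a v]
      simp
    -- entry values
    have hBii : B i i = c := by simp [hBdef]
    have hBij : B i j = -c := by simp [hBdef, Ne.symm hij]
    have hBji : B j i = c := by simp [hBdef, Ne.symm hij]
    have hBjj : B j j = c := by simp [hBdef, Ne.symm hij]
    have hBoth : ∀ a : Fin n, a ≠ i → a ≠ j → B i a = 0 ∧ B j a = 0 := by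
      intro a hai haj
      constructor <;> simp [hBdef, hai, haj, hij, Ne.symm hij]
    -- orthogonality
    have hBO : B ∈ Matrix.orthogonalGroup (Fin n) ℝ := by
      rw [Matrix.mem_orthogonalGroup_iff]
      ext a b
      rw [Matrix.mul_apply, Matrix.one_apply]
      have hstar : ∀ k : Fin n, (star B) k b = B b k := by
        intro k
        simp [Matrix.star_apply]
      rw [Finset.sum_congr rfl fun k _ =>
        show B a k * Bᵀ k b = B a k * B b k from rfl]
      by_cases ha : a = i
      · rw [ha, hBi (fun k => B b k)]
        by_cases hb : b = i
        · rw [hb, hBii, hBij, if_pos rfl]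
          linear_combination 2 * hc
        · by_cases hb2 : b = j
          · rw [hb2, hBji, hBjj, if_neg hij]
            ring
          · rw [show B b i = 0 by simp [hBdef, hb, hb2],
              show B b j = 0 by simp [hBdef, hb, hb2],
              if_neg (fun h => hb h.symm)]
            ring
      · by_cases ha2 : a = j
        · rw [ha2, hBj (fun k => B b k)]
          by_cases hb : b = i
          · rw [hb, hBii, hBij, if_neg (Ne.symm hij)]
            ring
          · by_cases hb2 : b = j
            · rw [hb2, hBji, hBjj, if_pos rfl]
              linear_combination 2 * hc
            · rw [show B b i = 0 by simp [hBdef, hb, hb2],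
                show B b j = 0 by simp [hBdef, hb, hb2],
                if_neg (fun h => hb2 h.symm)]
              ring
        · rw [hBo a ha ha2 (fun k => B b k)]
          by_cases hb : b = i
          · rw [hb, show B i a = 0 by simp [hBdef, ha, ha2], if_neg (fun h : a = i => ha h)]
          · by_cases hb2 : b = j
            · rw [hb2, show B j a = 0 by simp [hBdef, ha, ha2, Ne.symm hij],
                if_neg (fun h : a = j => ha2 h)]
            · rw [show B b a = if b = a then 1 else 0 by simp [hBdef, hb, hb2]]
              by_cases hab : a = b
              · simp [hab]
              · rw [if_neg hab, if_neg (fun h => hab h.symm)]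
    -- the rotated process and its law
    set Zp : Ω → ℝ≥0 → Fin n → ℝ := fun ω t' i' => Z t' ω i' with hZpdef
    have hZpm : Measurable Zp := measurable_pi_lambda _ fun t' => (hZm t').measurable
    set W : Ω → ℝ≥0 → Fin n → ℝ := fun ω t' i' => ∑ l, B i' l * (Z t' ω l - Z 0 ω l) with hWdef
    have hWm : Measurable W := by
      refine measurable_pi_lambda _ fun t' => ?_
      refine measurable_pi_lambda _ fun i' => ?_
      refine Finset.measurable_sum _ fun l _ => ?_
      exact measurable_const.mul (((measurable_pi_apply l).comp (hZm t').measurable).sub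
        ((measurable_pi_apply l).comp (hZm 0).measurable))
    have hlaw : P.map W = P.map Zp := by
      have hmeas : ∀ (k : ℕ) (S : Set (Matrix (Fin n) (Fin n) ℝ)), MeasurableSet S →
          ∀ t' : ℝ≥0, MeasurableSet[ℱ t']
            (((fun (_ : ℕ) (_ : Ω) => B) k ⁻¹' S) ∩
              {ω | (fun (k : ℕ) (_ : Ω) => (k : ℝ≥0)) k ω ≤ t'}) := by
        intro k S hS t'
        by_cases hBS : B ∈ S <;> by_cases hkt : ((k : ℕ) : ℝ≥0) ≤ t' <;>
          simp [Set.preimage_const, hBS, hkt]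
      have happ := hinv (fun k (_ : Ω) => (k : ℝ≥0)) (fun _ _ => B)
        (fun ω => by norm_num)
        (fun ω k => by
          show ((k : ℕ) : ℝ≥0) ≤ (((k + 1) : ℕ) : ℝ≥0)
          exact_mod_cast Nat.le_succ k)
        (fun ω => tendsto_natCast_atTop_atTop)
        (fun k => isStoppingTime_const ℱ _)
        (fun k ω => hBO)
        hmeas
      rw [← happ]
      congr 1
      funext ω t' i'
      symm
      show (∑' k : ℕ, ∑ l, B i' l *
          (Z (min (((k+1 : ℕ)) : ℝ≥0) t') ω l - Z (min ((k : ℕ) : ℝ≥0) t') ω l)) = W ω t' i'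
      -- telescoping sum
      set g : ℕ → ℝ := fun k => ∑ l, B i' l * Z (min ((k : ℕ) : ℝ≥0) t') ω l with hgdef
      set N : ℕ := ⌈t'⌉₊ with hNdef
      have hterm : ∀ k : ℕ,
          (∑ l, B i' l * (Z (min (((k+1 : ℕ)) : ℝ≥0) t') ω l - Z (min ((k : ℕ) : ℝ≥0) t') ω l))
            = g (k+1) - g k := by
        intro k
        simp only [hgdef]
        rw [← Finset.sum_sub_distrib]
        exact Finset.sum_congr rfl fun l _ => by ring
      have hvanish : ∀ k ∉ Finset.range N,
          (∑ l, B i' l * (Z (min (((k+1 : ℕ)) : ℝ≥0) t') ω l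
            - Z (min ((k : ℕ) : ℝ≥0) t') ω l)) = 0 := by
        intro k hk
        rw [Finset.mem_range, not_lt] at hk
        have h1 : t' ≤ ((k : ℕ) : ℝ≥0) := le_trans (Nat.le_ceil t') (by exact_mod_cast hk)
        have h2 : t' ≤ (((k+1) : ℕ) : ℝ≥0) := le_trans h1 (by exact_mod_cast Nat.le_succ k)
        rw [min_eq_right h1, min_eq_right h2]
        simp
      calc (∑' k : ℕ, ∑ l, B i' l *
              (Z (min (((k+1 : ℕ)) : ℝ≥0) t') ω l - Z (min ((k : ℕ) : ℝ≥0) t') ω l))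
          = ∑ k ∈ Finset.range N, (g (k+1) - g k) := by
            rw [tsum_eq_sum hvanish]
            exact Finset.sum_congr rfl fun k _ => hterm k
        _ = g N - g 0 := Finset.sum_range_sub g N
        _ = W ω t' i' := by
            simp only [hgdef, hWdef]
            rw [min_eq_right (Nat.le_ceil t')]
            rw [show (((0 : ℕ)) : ℝ≥0) = (0 : ℝ≥0) by norm_num, min_eq_left (zero_le : (0:ℝ≥0) ≤ t')]
            rw [← Finset.sum_sub_distrib]
            exact Finset.sum_congr rfl fun l _ => by ring
    -- quadratic variation functionals on path space
    set QF : Fin n → Fin n → ℕ → (ℝ≥0 → Fin n → ℝ) → ℝ := fun a b m x =>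
      ∑ k ∈ Finset.range (2 ^ m),
        (x (((k : ℝ≥0) + 1) * t / 2 ^ m) a - x ((k : ℝ≥0) * t / 2 ^ m) a) *
          (x (((k : ℝ≥0) + 1) * t / 2 ^ m) b - x ((k : ℝ≥0) * t / 2 ^ m) b) with hQFdef
    have hQFm : ∀ (a b : Fin n) (m : ℕ), Measurable (QF a b m) := by
      intro a b m
      simp only [hQFdef]
      refine Finset.measurable_sum _ fun k _ => Measurable.mul ?_ ?_ <;>
        exact Measurable.sub ((measurable_pi_apply _).comp (measurable_pi_apply _))
          ((measurable_pi_apply _).comp (measurable_pi_apply _))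
    have hQZ : ∀ a b : Fin n, TendstoInMeasure P (fun m ω => QF a b m (Zp ω)) atTop
        (fun ω => ∫ s in (0:ℝ)..(t:ℝ), Atil s.toNNReal ω a b) := fun a b => hAqv a b t
    have hzero : (fun ω => ∫ s in (0:ℝ)..(t:ℝ), Atil s.toNNReal ω i j) = fun _ => (0:ℝ) := by
      funext ω
      have h0 : ∀ s : ℝ, Atil s.toNNReal ω i j = 0 := fun s => hAdiag _ ω hij
      simp [h0]
    -- transfer of convergence in measure through the law identity
    have hTW0 : TendstoInMeasure P (fun m ω => QF i j m (W ω)) atTop (fun _ => (0:ℝ)) := by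
      intro ε hε
      have h1 := hQZ i j
      rw [hzero] at h1
      have h2 := h1 ε hε
      have hsetEq : ∀ m : ℕ, P {ω | ε ≤ edist (QF i j m (W ω)) ((fun _ => (0:ℝ)) ω)} =
          P {ω | ε ≤ edist (QF i j m (Zp ω)) ((fun _ => (0:ℝ)) ω)} := by
        intro m
        have hms : MeasurableSet {x : ℝ≥0 → Fin n → ℝ | ε ≤ edist (QF i j m x) 0} :=
          measurableSet_le measurable_const ((hQFm i j m).edist measurable_const)
        have e1 : {ω | ε ≤ edist (QF i j m (W ω)) ((fun _ => (0:ℝ)) ω)} =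
            W ⁻¹' {x | ε ≤ edist (QF i j m x) 0} := rfl
        have e2 : {ω | ε ≤ edist (QF i j m (Zp ω)) ((fun _ => (0:ℝ)) ω)} =
            Zp ⁻¹' {x | ε ≤ edist (QF i j m x) 0} := rfl
        rw [e1, e2, ← Measure.map_apply hWm hms, ← Measure.map_apply hZpm hms, hlaw]
      simpa only [hsetEq] using h2
    -- pointwise algebraic identity
    have hWQ : ∀ (m : ℕ) (ω : Ω), QF i j m (W ω)
        = 1/2 * QF i i m (Zp ω) - 1/2 * QF j j m (Zp ω) := by
      intro m ω
      have hterm : ∀ (t2 t1 : ℝ≥0),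
          (W ω t2 i - W ω t1 i) * (W ω t2 j - W ω t1 j) =
            1/2 * ((Zp ω t2 i - Zp ω t1 i) * (Zp ω t2 i - Zp ω t1 i)) -
              1/2 * ((Zp ω t2 j - Zp ω t1 j) * (Zp ω t2 j - Zp ω t1 j)) := by
        intro t2 t1
        have e : ∀ u : ℝ≥0, W ω u i
            = c * (Z u ω i - Z 0 ω i) - c * (Z u ω j - Z 0 ω j) := by
          intro u
          simp only [hWdef]
          exact hBi _
        have e' : ∀ u : ℝ≥0, W ω u j
            = c * (Z u ω i - Z 0 ω i) + c * (Z u ω j - Z 0 ω j) := by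
          intro u
          simp only [hWdef]
          exact hBj _
        rw [e, e, e', e']
        simp only [hZpdef]
        linear_combination ((Z t2 ω i - Z t1 ω i) * (Z t2 ω i - Z t1 ω i)
          - (Z t2 ω j - Z t1 ω j) * (Z t2 ω j - Z t1 ω j)) * hc
      simp only [hQFdef]
      rw [Finset.mul_sum, Finset.mul_sum, ← Finset.sum_sub_distrib]
      exact Finset.sum_congr rfl fun k _ => hterm _ _
    -- subsequence extraction and identification of limits
    obtain ⟨ns, hns, h0ae⟩ := hTW0.exists_seq_tendsto_ae
    obtain ⟨ms, hms, huae⟩ :=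
      (tendstoInMeasure_comp_subseq (hQZ i i) hns).exists_seq_tendsto_ae
    obtain ⟨ls, hls, hvae⟩ :=
      (tendstoInMeasure_comp_subseq
        (tendstoInMeasure_comp_subseq (hQZ j j) hns) hms).exists_seq_tendsto_ae
    filter_upwards [h0ae, huae, hvae] with ω hω0 hωu hωv
    have l1 : Tendsto (fun r => QF i j (ns (ms (ls r))) (W ω)) atTop (nhds 0) :=
      hω0.comp ((hms.comp hls).tendsto_atTop)
    have l2 : Tendsto (fun r => QF i i (ns (ms (ls r))) (Zp ω)) atTop
        (nhds (∫ s in (0:ℝ)..(t:ℝ), Atil s.toNNReal ω i i)) := hωu.comp hls.tendsto_atTop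
    have l3 : Tendsto (fun r => QF j j (ns (ms (ls r))) (Zp ω)) atTop
        (nhds (∫ s in (0:ℝ)..(t:ℝ), Atil s.toNNReal ω j j)) := hωv
    have l4 : Tendsto (fun r => QF i j (ns (ms (ls r))) (W ω)) atTop
        (nhds (1/2 * (∫ s in (0:ℝ)..(t:ℝ), Atil s.toNNReal ω i i)
          - 1/2 * (∫ s in (0:ℝ)..(t:ℝ), Atil s.toNNReal ω j j))) := by
      simp only [hWQ]
      exact (l2.const_mul (1/2)).sub (l3.const_mul (1/2))
    have hun := tendsto_nhds_unique l1 l4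
    linarith
  -- Step 2: assemble
  have keyAll : ∀ (i : Fin n) (t : ℝ≥0), ∀ᵐ ω ∂P,
      (∫ s in (0:ℝ)..(t:ℝ), Atil s.toNNReal ω i i)
        = ∫ s in (0:ℝ)..(t:ℝ), Atil s.toNNReal ω i0 i0 := by
    intro i t
    by_cases h : i = i0
    · subst h; exact Filter.Eventually.of_forall fun ω => rfl
    · exact key i i0 h t
  refine ⟨fun t ω =>
    (∫⁻ s in Set.Ioc (0:ℝ) (t:ℝ), ENNReal.ofReal (Atil s.toNNReal ω i0 i0)).toReal, ?_, ?_⟩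
  · -- predictability
    have hA00 : @Measurable _ _ (predictableSigma ℱ) _
        (fun p : ℝ≥0 × Ω => ENNReal.ofReal (Atil p.1 p.2 i0 i0)) :=
      ENNReal.measurable_ofReal.comp
        ((measurable_pi_apply i0).comp ((measurable_pi_apply i0).comp hApred))
    exact ENNReal.measurable_toReal.comp (measurable_pred_lintegral ℱ _ hA00)
  · intro i j t
    by_cases hij : i = j
    · subst hij
      have hFt : ∀ ω : Ω, (∫ s in (0:ℝ)..(t:ℝ), Atil s.toNNReal ω i0 i0) =
          (∫⁻ s in Set.Ioc (0:ℝ) (t:ℝ), ENNReal.ofReal (Atil s.toNNReal ω i0 i0)).toReal := by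
        intro ω
        rw [intervalIntegral.integral_of_le t.coe_nonneg]
        rw [MeasureTheory.integral_eq_lintegral_of_nonneg_ae
          (Filter.Eventually.of_forall fun s => posSemidef_diag_nonneg' (hApsd _ ω) i0)
          ((hAsec ω i0 i0).aestronglyMeasurable)]
      filter_upwards [keyAll i t] with ω hω
      rw [if_pos rfl, ← hFt ω]
      exact hω
    · refine Filter.Eventually.of_forall fun ω => ?_
      rw [if_neg hij]
      have h0 : ∀ s : ℝ, Atil s.toNNReal ω i j = 0 := fun s => hAdiag _ ω hij
      simp [h0]

end
end
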